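/- Let M be the free R-module on seven generators x0, x2, y2, x4, y4, r6, s6, and let d : M → M be the R-linear map with d(x2) = x0 + U²·y2, d(x4) = y2 + U²·y4 + U·r6, d(r6) = U·s6, d(y4) = s6, and d(x0) = d(y2) = d(s6) = 0. Then d ∘ d = 0, and the homology H = ker d / im d is a free R-module of rank 1, generated by the class of r6 + U·y4. -/
import Mathlib


noncomputable section

/-- `R = 𝔽₂[U]`, the polynomial ring in one variable over the field with two elements. -/
abbrev R : Type := Polynomial (ZMod 2)

/-- The variable `U` of `R = 𝔽₂[U]`. -/
def U : R := Polynomial.X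

/-- The free `R`-module on seven generators. -/
abbrev M : Type := Fin 7 → R

def x0 : M := Pi.single 0 1
def x2 : M := Pi.single 1 1
def y2 : M := Pi.single 2 1
def x4 : M := Pi.single 3 1
def y4 : M := Pi.single 4 1
def r6 : M := Pi.single 5 1
def s6 : M := Pi.single 6 1

/-- Let `M` be the free `R`-module on the seven generators `x0, x2, y2, x4, y4, r6, s6`,
and let `d : M → M` be the `R`-linear map with `d x2 = x0 + U² • y2`,
`d x4 = y2 + U² • y4 + U • r6`, `d r6 = U • s6`, `d y4 = s6`, and
`d x0 = d y2 = d s6 = 0`.  Then `d ∘ d = 0`, and the homology `H = ker d / im d` is a free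
`R`-module of rank one generated by the class of `r6 + U • y4`, i.e. the map `R → H`,
`r ↦ r • [r6 + U • y4]`, is bijective. -/
theorem homology_free_rank_one (d : M →ₗ[R] M)
    (hx2 : d x2 = x0 + (U ^ 2) • y2)
    (hx4 : d x4 = y2 + (U ^ 2) • y4 + U • r6)
    (hr6 : d r6 = U • s6)
    (hy4 : d y4 = s6)
    (hx0 : d x0 = 0) (hy2 : d y2 = 0) (hs6 : d s6 = 0) :
    d ∘ₗ d = 0 ∧
    ∃ hz : r6 + U • y4 ∈ LinearMap.ker d,
      Function.Bijective
        (LinearMap.toSpanSingleton R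
          (LinearMap.ker d ⧸ (LinearMap.range d).comap (LinearMap.ker d).subtype)
          (Submodule.Quotient.mk ⟨r6 + U • y4, hz⟩)) := by
  have h2 : (2 : R) = 0 := by exact_mod_cast CharP.cast_eq_zero R 2
  have hsingle : ∀ (i : Fin 7) (c : R), (Pi.single i c : M) = c • (Pi.single i 1 : M) := by
    intro i c; ext j; simp [Pi.single_apply]
  have hexp : ∀ m : M, m = m 0 • x0 + m 1 • x2 + m 2 • y2 + m 3 • x4 + m 4 • y4
      + m 5 • r6 + m 6 • s6 := by
    intro m
    conv_lhs => rw [(Finset.univ_sum_single m).symm]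
    rw [Fin.sum_univ_seven, hsingle 0 (m 0), hsingle 1 (m 1), hsingle 2 (m 2),
      hsingle 3 (m 3), hsingle 4 (m 4), hsingle 5 (m 5), hsingle 6 (m 6)]
    rfl
  have hcoord : ∀ m : M, d m = m 1 • x0 + (m 1 * U ^ 2 + m 3) • y2 + (m 3 * U ^ 2) • y4
      + (m 3 * U) • r6 + (m 5 * U + m 4) • s6 := by
    intro m
    conv_lhs => rw [hexp m]
    simp only [map_add, map_smul, hx0, hx2, hy2, hx4, hy4, hr6, hs6]
    module
  have hc0 : ∀ m : M, d m 0 = m 1 := by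
    intro m; rw [hcoord]; simp [x0, y2, y4, r6, s6, Pi.single_apply]
  have hc1 : ∀ m : M, d m 1 = 0 := by
    intro m; rw [hcoord]; simp [x0, y2, y4, r6, s6, Pi.single_apply]
  have hc2 : ∀ m : M, d m 2 = m 1 * U ^ 2 + m 3 := by
    intro m; rw [hcoord]; simp [x0, y2, y4, r6, s6, Pi.single_apply]
  have hc3 : ∀ m : M, d m 3 = 0 := by
    intro m; rw [hcoord]; simp [x0, y2, y4, r6, s6, Pi.single_apply]
  have hc4 : ∀ m : M, d m 4 = m 3 * U ^ 2 := by
    intro m; rw [hcoord]; simp [x0, y2, y4, r6, s6, Pi.single_apply]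
  have hc5 : ∀ m : M, d m 5 = m 3 * U := by
    intro m; rw [hcoord]; simp [x0, y2, y4, r6, s6, Pi.single_apply]
  have hc6 : ∀ m : M, d m 6 = m 5 * U + m 4 := by
    intro m; rw [hcoord]; simp [x0, y2, y4, r6, s6, Pi.single_apply]
  have hz : r6 + U • y4 ∈ LinearMap.ker d := by
    rw [LinearMap.mem_ker, map_add, map_smul, hr6, hy4, ← add_smul]
    rw [show U + U = 0 by linear_combination U * h2, zero_smul]
  refine ⟨?_, hz, ?_, ?_⟩
  · apply LinearMap.ext
    intro m
    rw [LinearMap.comp_apply, LinearMap.zero_apply, hcoord (d m), hc1, hc3, hc4, hc5]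
    rw [show m 3 * U * U + m 3 * U ^ 2 = 0 by linear_combination m 3 * U ^ 2 * h2]
    simp
  · -- injective
    rw [injective_iff_map_eq_zero]
    intro r hr
    rw [LinearMap.toSpanSingleton_apply, ← Submodule.Quotient.mk_smul,
      Submodule.Quotient.mk_eq_zero, Submodule.mem_comap] at hr
    obtain ⟨m, hm⟩ := hr
    have A : m 1 = 0 := by
      have := congrFun hm 0
      rw [hc0] at this
      simpa [r6, y4, Pi.single_apply] using this
    have B : m 1 * U ^ 2 + m 3 = 0 := by
      have := congrFun hm 2
      rw [hc2] at this
      simpa [r6, y4, Pi.single_apply] using this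
    have C : m 3 * U = r := by
      have := congrFun hm 5
      rw [hc5] at this
      simpa [r6, y4, Pi.single_apply] using this
    linear_combination U * B - U ^ 3 * A - C
  · -- surjective
    intro q
    obtain ⟨⟨m, hm⟩, rfl⟩ := Submodule.Quotient.mk_surjective _ q
    have hm' : d m = 0 := hm
    have A : m 1 = 0 := by have := congrFun hm' 0; rw [hc0] at this; simpa using this
    have B : m 1 * U ^ 2 + m 3 = 0 := by
      have := congrFun hm' 2; rw [hc2] at this; simpa using this
    have C : m 5 * U + m 4 = 0 := by
      have := congrFun hm' 6; rw [hc6] at this; simpa using this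
    refine ⟨m 0 * U ^ 3 + m 2 * U + m 5, ?_⟩
    rw [LinearMap.toSpanSingleton_apply, ← Submodule.Quotient.mk_smul,
      Submodule.Quotient.eq, Submodule.mem_comap, LinearMap.mem_range]
    refine ⟨m 0 • x2 + (m 0 * U ^ 2 + m 2) • x4 + m 6 • y4, ?_⟩
    simp only [Submodule.subtype_apply, Submodule.coe_sub, Submodule.coe_smul]
    simp only [map_add, map_smul, hx2, hx4, hy4]
    conv_rhs => rw [sub_eq_add_neg]; enter [2,1]; rw [hexp m]
    match_scalars <;>
      first
        | linear_combination m 0 * h2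
        | linear_combination A
        | linear_combination (m 0 * U ^ 2 + m 2) * h2
        | linear_combination B - U ^ 2 * A
        | linear_combination C - m 5 * U * h2
        | linear_combination m 6 * h2
        | ring
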